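/- The squared RKHS distance between the empirical joint embedding and the product of empirical marginal embeddings equals (1/n²)(K̃ ∘ L̃)_{++}: that is, ‖(1/n)∑_i φ_X(x_i)⊗φ_Y(y_i) − ((1/n)∑_i φ_X(x_i)) ⊗ ((1/n)∑_i φ_Y(y_i))‖² = (1/n²)∑_{i,j} K̃_{ij} L̃_{ij}. -/

import Mathlib

/-!
Centering the samples does not change the empirical cross-covariance
`n⁻¹ ∑ φᵢ ⊗ ψᵢ - μ ⊗ ν`, because the centered features `φᵢ - μ` average to zero. Written as
`n⁻¹ ∑ (φᵢ - μ) ⊗ (ψᵢ - ν)`, its squared norm expands bilinearly into the entries of the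
centered Gram matrices.
-/

open scoped RealInnerProductSpace

section Centering

variable {𝕜 ι E F G : Type*} [Field 𝕜] [Fintype ι]
  [AddCommGroup E] [Module 𝕜 E] [AddCommGroup F] [Module 𝕜 F] [AddCommGroup G] [Module 𝕜 G]

theorem inv_card_smul_sum_sub_mean (f : ι → E) :
    (Fintype.card ι : 𝕜)⁻¹ • ∑ i, (f i - (Fintype.card ι : 𝕜)⁻¹ • ∑ j, f j) = 0 := by
  set c : 𝕜 := (Fintype.card ι : 𝕜)⁻¹ with hc
  have hc' : c * (Fintype.card ι : 𝕜) * c = c := by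
    simpa only [hc, inv_inv] using mul_inv_mul_cancel c
  rw [Finset.sum_sub_distrib, Finset.sum_const, Finset.card_univ, ← Nat.cast_smul_eq_nsmul 𝕜,
    smul_sub, smul_smul, smul_smul, hc', sub_self]

theorem inv_card_smul_sum_bilin_sub_mean (T : E →ₗ[𝕜] F →ₗ[𝕜] G) (f : ι → E) (g : ι → F) :
    (Fintype.card ι : 𝕜)⁻¹ • ∑ i, T (f i - (Fintype.card ι : 𝕜)⁻¹ • ∑ j, f j)
        (g i - (Fintype.card ι : 𝕜)⁻¹ • ∑ j, g j)
      = (Fintype.card ι : 𝕜)⁻¹ • ∑ i, T (f i) (g i)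
        - T ((Fintype.card ι : 𝕜)⁻¹ • ∑ i, f i) ((Fintype.card ι : 𝕜)⁻¹ • ∑ i, g i) := by
  set c : 𝕜 := (Fintype.card ι : 𝕜)⁻¹
  set μf := c • ∑ j, f j
  set μg := c • ∑ j, g j
  have hmean_zero : c • ∑ i, T (f i - μf) μg = 0 := by
    rw [← LinearMap.sum_apply, ← LinearMap.smul_apply, ← map_sum, ← map_smul,
      inv_card_smul_sum_sub_mean, map_zero, LinearMap.zero_apply]
  calc c • ∑ i, T (f i - μf) (g i - μg)
      = c • ∑ i, T (f i - μf) (g i) - c • ∑ i, T (f i - μf) μg := by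
        simp only [map_sub, Finset.sum_sub_distrib, smul_sub]
    _ = c • ∑ i, T (f i) (g i) - T μf μg := by
        rw [hmean_zero, sub_zero]
        simp only [map_sub, LinearMap.sub_apply, Finset.sum_sub_distrib, smul_sub, ← map_sum,
          ← map_smul]
        rfl

end Centering

theorem norm_sum_sq_eq_sum_inner {ι E : Type*} [Fintype ι] [NormedAddCommGroup E]
    [InnerProductSpace ℝ E] (v : ι → E) :
    ‖∑ i, v i‖ ^ 2 = ∑ i, ∑ j, ⟪v i, v j⟫ := by
  rw [← real_inner_self_eq_norm_sq, sum_inner]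
  simp only [inner_sum]

theorem hsic_norm_eq_centered_gram_general
    {X Y : Type*} {HX HY W : Type*}
    [NormedAddCommGroup HX] [InnerProductSpace ℝ HX]
    [NormedAddCommGroup HY] [InnerProductSpace ℝ HY]
    [NormedAddCommGroup W] [InnerProductSpace ℝ W]
    (T : HX →ₗ[ℝ] HY →ₗ[ℝ] W)
    (hT : ∀ (a c : HX) (b d : HY), ⟪T a b, T c d⟫ = ⟪a, c⟫ * ⟪b, d⟫)
    (n : ℕ) (x : Fin n → X) (y : Fin n → Y)
    (φX : X → HX) (φY : Y → HY) :
    ‖(n : ℝ)⁻¹ • (∑ i, T (φX (x i)) (φY (y i)))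
        - T ((n : ℝ)⁻¹ • ∑ i, φX (x i)) ((n : ℝ)⁻¹ • ∑ i, φY (y i))‖ ^ 2
      = ((n : ℝ) ^ 2)⁻¹ *
        ∑ i, ∑ j,
          (⟪φX (x i) - (n : ℝ)⁻¹ • ∑ k, φX (x k),
            φX (x j) - (n : ℝ)⁻¹ • ∑ k, φX (x k)⟫
          * ⟪φY (y i) - (n : ℝ)⁻¹ • ∑ k, φY (y k),
              φY (y j) - (n : ℝ)⁻¹ • ∑ k, φY (y k)⟫) := by
  have hcentered := inv_card_smul_sum_bilin_sub_mean T (fun i ↦ φX (x i)) (fun i ↦ φY (y i))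
  rw [Fintype.card_fin] at hcentered
  rw [← hcentered, norm_smul, mul_pow, norm_inv, Real.norm_natCast, inv_pow,
    norm_sum_sq_eq_sum_inner]
  simp only [hT]

/-- the squared RKHS distance between the empirical joint embedding
and the product of empirical marginal embeddings equals (1/n²)(K̃ ∘ L̃)_{++}.
The Hilbert space tensor product is modelled abstractly by a Hilbert space `W`
together with a bilinear map `T` satisfying ⟪T a b, T c d⟫ = ⟪a,c⟫⟪b,d⟫. -/
theorem hsic_norm_eq_centered_gram
    {X Y : Type*} {HX HY W : Type*}
    [NormedAddCommGroup HX] [InnerProductSpace ℝ HX]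
    [NormedAddCommGroup HY] [InnerProductSpace ℝ HY]
    [NormedAddCommGroup W] [InnerProductSpace ℝ W]
    (T : HX →ₗ[ℝ] HY →ₗ[ℝ] W)
    (hT : ∀ (a c : HX) (b d : HY), ⟪T a b, T c d⟫ = ⟪a, c⟫ * ⟪b, d⟫)
    (n : ℕ) (hn : 1 ≤ n) (x : Fin n → X) (y : Fin n → Y)
    (φX : X → HX) (φY : Y → HY) :
    ‖(n : ℝ)⁻¹ • (∑ i, T (φX (x i)) (φY (y i)))
        - T ((n : ℝ)⁻¹ • ∑ i, φX (x i)) ((n : ℝ)⁻¹ • ∑ i, φY (y i))‖ ^ 2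
      = ((n : ℝ) ^ 2)⁻¹ *
        ∑ i, ∑ j,
          (⟪φX (x i) - (n : ℝ)⁻¹ • ∑ k, φX (x k),
            φX (x j) - (n : ℝ)⁻¹ • ∑ k, φX (x k)⟫
          * ⟪φY (y i) - (n : ℝ)⁻¹ • ∑ k, φY (y k),
              φY (y j) - (n : ℝ)⁻¹ • ∑ k, φY (y k)⟫) :=
  hsic_norm_eq_centered_gram_general T hT n x y φX φY
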